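/- arXiv:2103.13062 — 2 statements merged into one kernel-verified Lean document; each statement's English description precedes it below -/
import Mathlib

section
/- Let S be a Cu-semigroup and T_0 ⊆ S a countable subset. Then there exists a countably based sub-Cu-semigroup T ⊆ S with T_0 ⊆ T. -/
def WayBelow {S : Type*} [PartialOrder S] (x y : S) : Prop :=
  ∀ f : ℕ → S, Monotone f → ∀ z : S, IsLUB (Set.range f) z → y ≤ z → ∃ n, x ≤ f n

class CuSemigroup (S : Type*) [AddCommMonoid S] [PartialOrder S] : Prop where
  zero_le : ∀ x : S, 0 ≤ x
  add_le_add_left : ∀ x y : S, x ≤ y → ∀ z : S, z + x ≤ z + y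
  exists_sup : ∀ f : ℕ → S, Monotone f → ∃ z : S, IsLUB (Set.range f) z
  exists_wb_seq : ∀ x : S, ∃ f : ℕ → S, (∀ n, WayBelow (f n) (f (n + 1))) ∧ IsLUB (Set.range f) x
  wb_add : ∀ x' x y' y : S, WayBelow x' x → WayBelow y' y → WayBelow (x' + y') (x + y)
  sup_add : ∀ f g : ℕ → S, Monotone f → Monotone g → ∀ a b : S,
    IsLUB (Set.range f) a → IsLUB (Set.range g) b →
    IsLUB (Set.range fun n => f n + g n) (a + b)

def cuDerivedSet {S : Type*} [PartialOrder S] (T : Set S) : Set S :=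
  { s | ∃ f : ℕ → S, (∀ n, f n ∈ T) ∧ (∀ n, WayBelow (f n) (f (n + 1))) ∧ IsLUB (Set.range f) s }

def SupClosedSet {S : Type*} [PartialOrder S] (T : Set S) : Prop :=
  ∀ f : ℕ → S, Monotone f → (∀ n, f n ∈ T) → ∀ z : S, IsLUB (Set.range f) z → z ∈ T

def IsSubCu {S : Type*} [AddCommMonoid S] [PartialOrder S] (T : AddSubmonoid S) : Prop :=
  CuSemigroup T ∧
  (∀ f : ℕ → T, Monotone f → ∀ z : T, IsLUB (Set.range f) z →
    IsLUB (Set.range fun n => (f n : S)) (z : S)) ∧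
  (∀ x y : T, WayBelow x y → WayBelow (x : S) (y : S))

def CountablyBased (S : Type*) [PartialOrder S] : Prop :=
  ∃ B : Set S, B.Countable ∧ ∀ x' x : S, WayBelow x' x → ∃ b ∈ B, WayBelow x' b ∧ WayBelow b x

section Aux
variable {S : Type*} [PartialOrder S]

lemma WayBelow.le {x y : S} (h : WayBelow x y) : x ≤ y := by
  obtain ⟨n, hn⟩ := h (fun _ => y) monotone_const y
    (by rw [Set.range_const]; exact isLUB_singleton) le_rfl
  exact hn

lemma WayBelow.mono_right {x y y' : S} (h : WayBelow x y) (h' : y ≤ y') : WayBelow x y' :=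
  fun f hf z hz hyz => h f hf z hz (h'.trans hyz)

lemma WayBelow.mono_left {x y : S} (h : WayBelow x y) {x' : S} (h' : x' ≤ x) : WayBelow x' y :=
  fun f hf z hz hyz => (h f hf z hz hyz).imp fun _ hn => h'.trans hn

lemma wb_finite_le (g : ℕ → S) (hg : Monotone g) (y : S) (hy : IsLUB (Set.range g) y)
    (N : ℕ) : ∀ a : ℕ → S, (∀ j < N, WayBelow (a j) y) → ∃ m, ∀ j < N, a j ≤ g m := by
  induction N with
  | zero => exact fun a _ => ⟨0, fun j hj => absurd hj (by omega)⟩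
  | succ N ih =>
    intro a ha
    obtain ⟨m1, hm1⟩ := ih a (fun j hj => ha j (hj.trans (Nat.lt_succ_self N)))
    obtain ⟨m2, hm2⟩ := ha N (Nat.lt_succ_self N) g hg y hy le_rfl
    refine ⟨max m1 m2, fun j hj => ?_⟩
    rcases Nat.lt_succ_iff_lt_or_eq.mp hj with hlt | heq
    · exact (hm1 j hlt).trans (hg (le_max_left _ _))
    · subst heq; exact hm2.trans (hg (le_max_right _ _))

end Aux

lemma exists_seq_of_step {α : Type*} (P : ℕ → α → Prop) (R : α → α → Prop)
    (h0 : ∃ a, P 0 a) (hs : ∀ k a, P k a → ∃ b, P (k + 1) b ∧ R a b) :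
    ∃ c : ℕ → α, (∀ k, P k (c k)) ∧ ∀ k, R (c k) (c (k + 1)) := by
  classical
  let F : ∀ k, {a : α // P k a} := fun k =>
    Nat.rec ⟨h0.choose, h0.choose_spec⟩
      (fun k ih => ⟨(hs k ih.1 ih.2).choose, (hs k ih.1 ih.2).choose_spec.1⟩) k
  exact ⟨fun k => (F k).1, fun k => (F k).2,
    fun k => (hs k (F k).1 (F k).2).choose_spec.2⟩

lemma supClosed_cuDerivedSet {S : Type*} [AddCommMonoid S] [PartialOrder S] [CuSemigroup S]
    (W : Set S) : SupClosedSet (cuDerivedSet W) := by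
  intro t ht htW z hz
  choose b hbW hbwb hbsup using htW
  have hbmono : ∀ j, Monotone (b j) := fun j => monotone_nat_of_le_succ fun n => (hbwb j n).le
  have hble : ∀ j m, b j m ≤ t j := fun j m => (hbsup j).1 ⟨m, rfl⟩
  have hbwbt : ∀ j m, WayBelow (b j m) (t j) := fun j m => (hbwb j m).mono_right (hble j (m + 1))
  have hstep : ∀ k (u : S), WayBelow u (t k) →
      ∃ v, (v ∈ W ∧ WayBelow v (t (k + 1)) ∧ ∀ j ≤ k + 1, b j (k + 1) ≤ v) ∧ WayBelow u v := by
    intro k u hu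
    obtain ⟨m1, hm1⟩ := wb_finite_le (b (k + 1)) (hbmono (k + 1)) (t (k + 1)) (hbsup (k + 1))
      (k + 2) (fun j => b j (k + 1))
      (fun j hj => (hbwbt j (k + 1)).mono_right (ht (by omega : j ≤ k + 1)))
    obtain ⟨m2, hm2⟩ := (hu.mono_right (ht (Nat.le_succ k))) (b (k + 1)) (hbmono (k + 1))
      (t (k + 1)) (hbsup (k + 1)) le_rfl
    refine ⟨b (k + 1) (max m1 m2 + 1), ⟨hbW _ _, hbwbt (k + 1) _, fun j hj => ?_⟩, ?_⟩
    · exact (hm1 j (by omega)).trans (hbmono (k + 1) (by omega : m1 ≤ max m1 m2 + 1))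
    · exact (hbwb (k + 1) (max m1 m2)).mono_left
        (hm2.trans (hbmono (k + 1) (le_max_right m1 m2)))
  obtain ⟨c, hcP, hcR⟩ := exists_seq_of_step
    (fun k u => u ∈ W ∧ WayBelow u (t k) ∧ ∀ j ≤ k, b j k ≤ u) WayBelow
    ⟨b 0 1, hbW 0 1, hbwbt 0 1, fun j hj => by
      cases Nat.le_zero.mp hj; exact (hbwb 0 0).le⟩
    (fun k u hu => by
      obtain ⟨v, hv, huv⟩ := hstep k u hu.2.1
      exact ⟨v, ⟨hv.1, hv.2.1, hv.2.2⟩, huv⟩)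
  have hcmono : Monotone c := monotone_nat_of_le_succ fun k => (hcR k).le
  obtain ⟨z', hz'⟩ := CuSemigroup.exists_sup c hcmono
  have hz'T : z' ∈ cuDerivedSet W := ⟨c, fun k => (hcP k).1, hcR, hz'⟩
  have h1 : z' ≤ z := hz'.2 (mem_upperBounds.mpr fun s hs => by
    obtain ⟨k, rfl⟩ := hs
    exact ((hcP k).2.1.le).trans (hz.1 ⟨k, rfl⟩))
  have h2 : z ≤ z' := hz.2 (mem_upperBounds.mpr fun s hs => by
    obtain ⟨j, rfl⟩ := hs
    refine (hbsup j).2 (mem_upperBounds.mpr fun s hs => ?_)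
    obtain ⟨m, rfl⟩ := hs
    calc b j m ≤ b j (max j m) := hbmono j (le_max_right _ _)
      _ ≤ c (max j m) := (hcP (max j m)).2.2 j (le_max_left _ _)
      _ ≤ z' := hz'.1 ⟨_, rfl⟩)
  have : z' = z := le_antisymm h1 h2
  exact this ▸ hz'T

theorem exists_countablyBased_subCu {S : Type*} [AddCommMonoid S] [PartialOrder S]
    [CuSemigroup S] (T0 : Set S) (h : T0.Countable) :
    ∃ T : AddSubmonoid S, IsSubCu T ∧ CountablyBased ↥T ∧ T0 ⊆ (T : Set S) := by
  classical
  choose seq hseqwb hseqsup using fun x : S => CuSemigroup.exists_wb_seq x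
  let B : ℕ → Set S := fun n => Nat.rec (T0 ∪ {0})
    (fun _ Bn => Bn ∪ Set.image2 (· + ·) Bn Bn ∪ ⋃ x ∈ Bn, Set.range (seq x)) n
  have hBsucc : ∀ n, B (n + 1) =
      B n ∪ Set.image2 (· + ·) (B n) (B n) ∪ ⋃ x ∈ B n, Set.range (seq x) := fun n => rfl
  have hBc : ∀ n, (B n).Countable := by
    intro n
    induction n with
    | zero => exact h.union (Set.countable_singleton 0)
    | succ n ih =>
      rw [hBsucc]
      exact (ih.union (ih.image2 ih _)).union
        (Set.Countable.biUnion ih fun x _ => Set.countable_range _)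
  have hBmono : Monotone B := monotone_nat_of_le_succ fun n => by
    rw [hBsucc]
    exact Set.subset_union_left.trans Set.subset_union_left
  set Bw : Set S := ⋃ n, B n with hBwdef
  have hBwc : Bw.Countable := Set.countable_iUnion hBc
  have hmemBw : ∀ n, B n ⊆ Bw := fun n => Set.subset_iUnion B n
  have hT0Bw : T0 ⊆ Bw := fun x hx => hmemBw 0 (Or.inl hx)
  have h0Bw : (0 : S) ∈ Bw := hmemBw 0 (Or.inr rfl)
  have haddBw : ∀ a ∈ Bw, ∀ b ∈ Bw, a + b ∈ Bw := by
    intro a ha b hb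
    obtain ⟨na, hna⟩ := Set.mem_iUnion.mp ha
    obtain ⟨nb, hnb⟩ := Set.mem_iUnion.mp hb
    refine hmemBw (max na nb + 1) ?_
    rw [hBsucc]
    exact Or.inl (Or.inr (Set.mem_image2_of_mem (hBmono (le_max_left na nb) hna)
      (hBmono (le_max_right na nb) hnb)))
  have hseqBw : ∀ x ∈ Bw, ∀ k, seq x k ∈ Bw := by
    intro x hx k
    obtain ⟨n, hn⟩ := Set.mem_iUnion.mp hx
    refine hmemBw (n + 1) ?_
    rw [hBsucc]
    exact Or.inr (Set.mem_biUnion hn ⟨k, rfl⟩)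
  set Tc : Set S := cuDerivedSet Bw with hTcdef
  have hBwT : Bw ⊆ Tc := fun x hx => ⟨seq x, fun k => hseqBw x hx k, hseqwb x, hseqsup x⟩
  have hTadd : ∀ a ∈ Tc, ∀ b ∈ Tc, a + b ∈ Tc := by
    rintro a ⟨f, hfW, hfwb, hfs⟩ b ⟨g, hgW, hgwb, hgs⟩
    exact ⟨fun n => f n + g n, fun n => haddBw _ (hfW n) _ (hgW n),
      fun n => CuSemigroup.wb_add _ _ _ _ (hfwb n) (hgwb n),
      CuSemigroup.sup_add f g (monotone_nat_of_le_succ fun n => (hfwb n).le)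
        (monotone_nat_of_le_succ fun n => (hgwb n).le) a b hfs hgs⟩
  let T : AddSubmonoid S :=
    { carrier := Tc
      zero_mem' := hBwT h0Bw
      add_mem' := fun ha hb => hTadd _ ha _ hb }
  have hTmem : ∀ x : ↥T, (x : S) ∈ cuDerivedSet Bw := fun x => x.2
  have hsupcl := supClosed_cuDerivedSet Bw
  have coeMono : ∀ f : ℕ → ↥T, Monotone f → Monotone (fun n => (f n : S)) :=
    fun f hf a b hab => hf hab
  have key : ∀ f : ℕ → ↥T, Monotone f → ∀ z : ↥T, IsLUB (Set.range f) z →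
      IsLUB (Set.range fun n => (f n : S)) (z : S) := by
    intro f hf z hz
    obtain ⟨z', hz'⟩ := CuSemigroup.exists_sup (fun n => (f n : S)) (coeMono f hf)
    have hz'T : z' ∈ Tc := hsupcl _ (coeMono f hf) (fun n => hTmem (f n)) z' hz'
    have h1' : z ≤ (⟨z', hz'T⟩ : ↥T) := hz.2 (mem_upperBounds.mpr fun s hs => by
      obtain ⟨n, rfl⟩ := hs
      exact Subtype.coe_le_coe.mp (hz'.1 ⟨n, rfl⟩))
    have h1 : (z : S) ≤ z' := h1'
    have h2 : z' ≤ (z : S) := hz'.2 (mem_upperBounds.mpr fun s hs => by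
      obtain ⟨n, rfl⟩ := hs
      exact hz.1 ⟨n, rfl⟩)
    have : (z : S) = z' := le_antisymm h1 h2
    rw [this]; exact hz'
  have key2 : ∀ f : ℕ → ↥T, ∀ z : ↥T, IsLUB (Set.range fun n => (f n : S)) (z : S) →
      IsLUB (Set.range f) z := by
    intro f z hz
    refine ⟨mem_upperBounds.mpr fun s hs => ?_, fun w hw => ?_⟩
    · obtain ⟨n, rfl⟩ := hs
      exact hz.1 ⟨n, rfl⟩
    · exact hz.2 (mem_upperBounds.mpr fun s hs => by
        obtain ⟨n, rfl⟩ := hs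
        exact hw ⟨n, rfl⟩)
  have wbST : ∀ x y : ↥T, WayBelow (x : S) (y : S) → WayBelow x y := by
    intro x y hxy f hf z hz hyz
    obtain ⟨n, hn⟩ := hxy (fun n => (f n : S)) (coeMono f hf) (z : S) (key f hf z hz) hyz
    exact ⟨n, hn⟩
  have wbTS : ∀ x y : ↥T, WayBelow x y → WayBelow (x : S) (y : S) := by
    intro x y hxy
    obtain ⟨g, hgW, hgwb, hgs⟩ := hTmem y
    have hglub : IsLUB (Set.range fun n => (((⟨g n, hBwT (hgW n)⟩ : ↥T)) : S)) (y : S) := hgs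
    obtain ⟨n, hn⟩ := hxy (fun n => ⟨g n, hBwT (hgW n)⟩)
      (monotone_nat_of_le_succ fun n => ((hgwb n).le : g n ≤ g (n + 1))) y
      (key2 _ y hglub) le_rfl
    exact ((hgwb n).mono_left (hn : (x : S) ≤ g n)).mono_right (hgs.1 ⟨n + 1, rfl⟩)
  have instT : CuSemigroup ↥T := by
    refine ⟨?_, ?_, ?_, ?_, ?_, ?_⟩
    · intro x
      exact (CuSemigroup.zero_le (x : S) : ((0 : ↥T) : S) ≤ (x : S))
    · intro x y hxy z
      exact (CuSemigroup.add_le_add_left (x : S) (y : S) hxy (z : S) :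
        ((z + x : ↥T) : S) ≤ ((z + y : ↥T) : S))
    · intro f hf
      obtain ⟨z', hz'⟩ := CuSemigroup.exists_sup (fun n => (f n : S)) (coeMono f hf)
      exact ⟨⟨z', hsupcl _ (coeMono f hf) (fun n => hTmem (f n)) z' hz'⟩, key2 f _ hz'⟩
    · intro x
      obtain ⟨g, hgW, hgwb, hgs⟩ := hTmem x
      exact ⟨fun n => ⟨g n, hBwT (hgW n)⟩, fun n => wbST _ _ (hgwb n), key2 _ x hgs⟩
    · intro x' x y' y hx hy
      have := CuSemigroup.wb_add _ _ _ _ (wbTS _ _ hx) (wbTS _ _ hy)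
      exact wbST (x' + y') (x + y) this
    · intro f g hf hg a b ha hb
      have := CuSemigroup.sup_add _ _ (coeMono f hf) (coeMono g hg) _ _
        (key f hf a ha) (key g hg b hb)
      exact key2 (fun n => f n + g n) (a + b) this
  refine ⟨T, ⟨instT, key, wbTS⟩, ?_, fun x hx => hBwT (hT0Bw hx)⟩
  refine ⟨Subtype.val ⁻¹' Bw, hBwc.preimage Subtype.coe_injective, ?_⟩
  intro x' x hwb
  have hS := wbTS x' x hwb
  obtain ⟨g, hgW, hgwb, hgs⟩ := hTmem x
  obtain ⟨n, hn⟩ := hS g (monotone_nat_of_le_succ fun n => (hgwb n).le) (x : S) hgs le_rfl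
  refine ⟨⟨g (n + 1), hBwT (hgW (n + 1))⟩, hgW (n + 1), ?_, ?_⟩
  · exact wbST _ _ ((hgwb n).mono_left hn)
  · exact wbST _ _ ((hgwb (n + 1)).mono_right (hgs.1 ⟨n + 2, rfl⟩))
end

section
/- Let S be a Cu-semigroup approximated by a family (S_λ, φ_λ). If each S_λ is weakly cancellative, then so is S. -/
def IsCuMorphism {T S : Type*} [AddCommMonoid T] [PartialOrder T] [AddCommMonoid S]
    [PartialOrder S] (φ : T → S) : Prop :=
  φ 0 = 0 ∧ (∀ x y : T, φ (x + y) = φ x + φ y) ∧ Monotone φ ∧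
  (∀ f : ℕ → T, Monotone f → ∀ z : T, IsLUB (Set.range f) z →
    IsLUB (Set.range fun n => φ (f n)) (φ z)) ∧
  (∀ x y : T, WayBelow x y → WayBelow (φ x) (φ y))

def Approximates {S : Type*} [AddCommMonoid S] [PartialOrder S] {ι : Type*}
    (Sl : ι → Type*) [∀ i, AddCommMonoid (Sl i)] [∀ i, PartialOrder (Sl i)]
    (φ : ∀ i, Sl i → S) : Prop :=
  ∀ (p q : ℕ) (x' x : Fin p → S) (m n : Fin q → Fin p → ℕ),
    (∀ j, WayBelow (x' j) (x j)) →
    (∀ k, WayBelow (∑ j, m k j • x j) (∑ j, n k j • x' j)) →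
    ∃ i, ∃ y : Fin p → Sl i,
      (∀ j, WayBelow (x' j) (φ i (y j)) ∧ WayBelow (φ i (y j)) (x j)) ∧
      ∀ k, WayBelow (∑ j, m k j • y j) (∑ j, n k j • y j)

def WeaklyCancellative (S : Type*) [AddCommMonoid S] [PartialOrder S] : Prop :=
  ∀ x y z : S, WayBelow (x + z) (y + z) → WayBelow x y

theorem wayBelow_le {S : Type*} [PartialOrder S] {x y : S} (h : WayBelow x y) : x ≤ y := by
  obtain ⟨n, hn⟩ := h (fun _ => y) monotone_const y
    ⟨by rintro _ ⟨n, rfl⟩; exact le_rfl, fun b hb => hb ⟨0, rfl⟩⟩ le_rfl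
  exact hn

theorem le_wayBelow {S : Type*} [PartialOrder S] {x y w : S} (hxy : x ≤ y) (h : WayBelow y w) :
    WayBelow x w := fun f hf z hz hw => (h f hf z hz hw).imp fun _ hn => hxy.trans hn

theorem wayBelow_of_le {S : Type*} [PartialOrder S] {x y w : S} (h : WayBelow x y) (hyw : y ≤ w) :
    WayBelow x w := fun f hf z hz hwz => h f hf z hz (hyw.trans hwz)

theorem cu_add_le_add {S : Type*} [AddCommMonoid S] [PartialOrder S] [CuSemigroup S]
    {a b c d : S} (h1 : a ≤ b) (h2 : c ≤ d) : a + c ≤ b + d := by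
  calc a + c ≤ a + d := CuSemigroup.add_le_add_left c d h2 a
    _ = d + a := add_comm _ _
    _ ≤ d + b := CuSemigroup.add_le_add_left a b h1 d
    _ = b + d := add_comm _ _

theorem approx_le_cancel {S : Type*} [AddCommMonoid S] [PartialOrder S]
    [CuSemigroup S] {ι : Type*} (Sl : ι → Type*) [∀ i, AddCommMonoid (Sl i)]
    [∀ i, PartialOrder (Sl i)] [∀ i, CuSemigroup (Sl i)]
    (φ : ∀ i, Sl i → S) (hφ : ∀ i, IsCuMorphism (φ i))
    (happrox : Approximates Sl φ)
    (hcanc : ∀ i, WeaklyCancellative (Sl i)) :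
    ∀ x y z : S, WayBelow (x + z) (y + z) → x ≤ y := by
  intro x y z hxz
  obtain ⟨g, hg, hgl⟩ := CuSemigroup.exists_wb_seq y
  obtain ⟨h, hh, hhl⟩ := CuSemigroup.exists_wb_seq z
  have hgm : Monotone g := monotone_nat_of_le_succ fun n => wayBelow_le (hg n)
  have hhm : Monotone h := monotone_nat_of_le_succ fun n => wayBelow_le (hh n)
  have hgy : ∀ n, g n ≤ y := fun n => hgl.1 ⟨n, rfl⟩
  have hhz : ∀ n, h n ≤ z := fun n => hhl.1 ⟨n, rfl⟩
  have hsum : IsLUB (Set.range fun n => g n + h n) (y + z) :=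
    CuSemigroup.sup_add g h hgm hhm y z hgl hhl
  have hsumm : Monotone fun n => g n + h n := fun a b hab => cu_add_le_add (hgm hab) (hhm hab)
  obtain ⟨k, hk⟩ := hxz _ hsumm _ hsum le_rfl
  obtain ⟨fx, hfx, hfxl⟩ := CuSemigroup.exists_wb_seq x
  have main : ∀ nn, fx nn ≤ y := by
    intro nn
    have hx' : WayBelow (fx nn) x := wayBelow_of_le (hfx nn) (hfxl.1 ⟨nn + 1, rfl⟩)
    set X' : Fin 3 → S := ![fx nn, g (k + 1), h (k + 1)] with hX'
    set X : Fin 3 → S := ![x, g (k + 2), h (k + 2)] with hX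
    set M : Fin 1 → Fin 3 → ℕ := ![![1, 0, 1]] with hM
    set N : Fin 1 → Fin 3 → ℕ := ![![0, 1, 1]] with hN
    have hyp1 : ∀ j, WayBelow (X' j) (X j) := by
      intro j
      fin_cases j
      · exact hx'
      · exact hg (k + 1)
      · exact hh (k + 1)
    have hyp2 : ∀ kk, WayBelow (∑ j, M kk j • X j) (∑ j, N kk j • X' j) := by
      intro kk
      have hkk : kk = 0 := Subsingleton.elim _ _
      subst hkk
      have e1 : (∑ j, M 0 j • X j) = x + h (k + 2) := by
        simp [hM, hX, Fin.sum_univ_three]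
      have e2 : (∑ j, N 0 j • X' j) = g (k + 1) + h (k + 1) := by
        simp [hN, hX', Fin.sum_univ_three]
      rw [e1, e2]
      have h1 : x + h (k + 2) ≤ g k + h k :=
        le_trans (CuSemigroup.add_le_add_left _ _ (hhz (k + 2)) x) hk
      exact le_wayBelow h1 (CuSemigroup.wb_add _ _ _ _ (hg k) (hh k))
    obtain ⟨i, yv, hyv, hrel⟩ := happrox 3 1 X' X M N hyp1 hyp2
    have hr0 := hrel 0
    have e3 : (∑ j, M 0 j • yv j) = yv 0 + yv 2 := by
      simp [hM, Fin.sum_univ_three]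
    have e4 : (∑ j, N 0 j • yv j) = yv 1 + yv 2 := by
      simp [hN, Fin.sum_univ_three]
    rw [e3, e4] at hr0
    have hc : WayBelow (yv 0) (yv 1) := hcanc i _ _ _ hr0
    calc fx nn ≤ φ i (yv 0) := wayBelow_le (hyv 0).1
      _ ≤ φ i (yv 1) := (hφ i).2.2.1 (wayBelow_le hc)
      _ ≤ g (k + 2) := wayBelow_le (hyv 1).2
      _ ≤ y := hgy (k + 2)
  exact hfxl.2 (by rintro _ ⟨nn, rfl⟩; exact main nn)

theorem approximates_weaklyCancellative {S : Type*} [AddCommMonoid S] [PartialOrder S]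
    [CuSemigroup S] {ι : Type*} (Sl : ι → Type*) [∀ i, AddCommMonoid (Sl i)]
    [∀ i, PartialOrder (Sl i)] [∀ i, CuSemigroup (Sl i)]
    (φ : ∀ i, Sl i → S) (hφ : ∀ i, IsCuMorphism (φ i))
    (happrox : Approximates Sl φ)
    (hcanc : ∀ i, WeaklyCancellative (Sl i)) :
    WeaklyCancellative S := by
  intro x y z hxz
  obtain ⟨g, hg, hgl⟩ := CuSemigroup.exists_wb_seq y
  obtain ⟨h, hh, hhl⟩ := CuSemigroup.exists_wb_seq z
  have hgm : Monotone g := monotone_nat_of_le_succ fun n => wayBelow_le (hg n)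
  have hhm : Monotone h := monotone_nat_of_le_succ fun n => wayBelow_le (hh n)
  have hgy : ∀ n, g n ≤ y := fun n => hgl.1 ⟨n, rfl⟩
  have hhz : ∀ n, h n ≤ z := fun n => hhl.1 ⟨n, rfl⟩
  have hsum : IsLUB (Set.range fun n => g n + h n) (y + z) :=
    CuSemigroup.sup_add g h hgm hhm y z hgl hhl
  have hsumm : Monotone fun n => g n + h n := fun a b hab => cu_add_le_add (hgm hab) (hhm hab)
  obtain ⟨k, hk⟩ := hxz _ hsumm _ hsum le_rfl
  have h1 : WayBelow (x + h (k + 1)) (g (k + 1) + h (k + 1)) := by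
    have hle : x + h (k + 1) ≤ g k + h k :=
      le_trans (CuSemigroup.add_le_add_left _ _ (hhz (k + 1)) x) hk
    exact le_wayBelow hle (CuSemigroup.wb_add _ _ _ _ (hg k) (hh k))
  have hxg : x ≤ g (k + 1) := approx_le_cancel Sl φ hφ happrox hcanc x (g (k + 1)) (h (k + 1)) h1
  exact le_wayBelow hxg (wayBelow_of_le (hg (k + 1)) (hgy (k + 2)))
end
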